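/- Let n ≥ 1 and let TSSCPP(n) ⊆ ℝ^(n×n) be the convex hull of the set of n×n magog matrices (viewed as real matrices). Then every matrix A = (a_{ij}) ∈ TSSCPP(n) satisfies: (i) ∑_{j'=1}^{j} a_{i+1,j'} + ∑_{i'=1}^{i+1} a_{i',j+1} ≥ 1 for all 1 ≤ i ≤ n−2 and 1 ≤ j ≤ n−2 with i + j ≥ n−1; (ii) ∑_{j'=1}^{j+1} a_{2,j'} + ∑_{j'=j+1}^{n} a_{1,j'} ≥ 1 for all 1 ≤ j ≤ n−3; and (iii) ∑_{i'=1}^{i+1} a_{i',2} + ∑_{i'=i+1}^{n} a_{i',1} ≥ 1 for all 1 ≤ i ≤ n−3. -/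

import Mathlib

/-- An `n × n` square sign matrix: a `{0, 1, -1}`-matrix whose rows and columns
all sum to 1, whose partial column sums lie in `{0, 1}`, and whose partial row
sums are nonnegative. -/
def IsSquareSign (n : ℕ) (A : Fin n → Fin n → ℤ) : Prop :=
  (∀ i j, A i j = -1 ∨ A i j = 0 ∨ A i j = 1) ∧
  (∀ j, ∑ i, A i j = 1) ∧
  (∀ i, ∑ j, A i j = 1) ∧
  (∀ i j : Fin n, 0 ≤ ∑ i' ∈ Finset.Iic i, A i' j ∧ ∑ i' ∈ Finset.Iic i, A i' j ≤ 1) ∧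
  (∀ i j : Fin n, 0 ≤ ∑ j' ∈ Finset.Iic j, A i j')

/-- An `n × n` magog matrix: a square sign matrix satisfying the
`(i,j)`-special inequalities (stated here with 0-based indices `i, j`,
corresponding to the paper's 1-based `i+1, j+1` with `1 ≤ i, j ≤ n-2`). -/
def IsMagog (n : ℕ) (A : Fin n → Fin n → ℤ) : Prop :=
  IsSquareSign n A ∧
  ∀ (i j : ℕ) (hi : i + 2 < n) (hj : j + 2 < n),
    0 ≤ (∑ j' ∈ Finset.Iic (⟨j, by omega⟩ : Fin n), A ⟨i + 1, by omega⟩ j')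
      + (∑ i' ∈ Finset.Iic (⟨i + 1, by omega⟩ : Fin n), A i' ⟨j + 1, by omega⟩)
      - (∑ i' ∈ Finset.Iic (⟨i, by omega⟩ : Fin n), A i' ⟨j, by omega⟩)

/-- The set of `n × n` magog matrices regarded as real matrices. -/
def magogReal (n : ℕ) : Set (Fin n → Fin n → ℝ) :=
  {A | ∃ M : Fin n → Fin n → ℤ, IsMagog n M ∧ A = fun i j => (M i j : ℝ)}

/-!
All three inequalities are linear, so it suffices to check them on magog matrices `M`.

(i) The special inequality at `(i, m)` bounds the hook `∑_{j' < m} M_{i+1,j'} + ∑_{i' ≤ i+1} M_{i',m}`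
by twice the hook at `m + 1`. If the inequality failed, the hook at `j + 1` would vanish, hence
so would all earlier hooks and the first `j + 2` column sums of rows `0, …, i + 1`. These rows
contain `i + 2` in total and each column sum is at most one, so `i + j + 4 ≤ n`.

(ii), (iii) The first row (resp. column) is a 0/1-vector with a single one. The special
inequality at that one pushes the partial sum of the second row (column) up to one, and past
that position the entries of the second row (column) are nonnegative.
-/

open Finset

theorem le_of_mem_convexHull {𝕜 E β : Type*} [Semiring 𝕜] [PartialOrder 𝕜] [AddCommMonoid E]
    [Module 𝕜 E] [AddCommMonoid β] [PartialOrder β] [IsOrderedAddMonoid β] [Module 𝕜 β]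
    [PosSMulMono 𝕜 β] {s : Set E} {f : E → β} (hf : IsLinearMap 𝕜 f) {r : β}
    (hs : ∀ x ∈ s, r ≤ f x) {x : E} (hx : x ∈ convexHull 𝕜 s) : r ≤ f x :=
  convexHull_min hs (convex_halfSpace_ge hf r) hx

theorem isLinearMap_sum_apply_add_sum_apply {R ι κ σ τ : Type*} [CommSemiring R]
    (s : Finset σ) (t : Finset τ) (p : σ → ι) (q : σ → κ) (p' : τ → ι) (q' : τ → κ) :
    IsLinearMap R fun A : ι → κ → R => ∑ x ∈ s, A (p x) (q x) + ∑ y ∈ t, A (p' y) (q' y) where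
  map_add A B := by simp only [Pi.add_apply, sum_add_distrib]; abel
  map_smul c A := by simp only [Pi.smul_apply, smul_eq_mul, mul_add, mul_sum]

theorem sum_range_le_sum_range_succ_of_le_add_sum {a b : ℕ → ℤ} {N : ℕ}
    (ha : ∀ k < N, 0 ≤ a k) (ha_sum : ∑ k ∈ range N, a k ≤ 1) (hab : ∀ k < N, 0 ≤ a k + b k)
    (hb : ∀ k < N, 0 ≤ ∑ l ∈ range (k + 1), b l)
    (hle : ∀ k, k + 2 < N → a k ≤ a (k + 1) + ∑ l ∈ range (k + 2), b l) :
    ∀ m, m + 1 < N → ∑ k ∈ range m, a k ≤ ∑ k ∈ range (m + 1), b k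
  | 0, _ => by simpa using hb 0 (by omega)
  | m + 1, hm => by
    have ih := sum_range_le_sum_range_succ_of_le_add_sum ha ha_sum hab hb hle m (by omega)
    have ha_prefix : 0 ≤ ∑ k ∈ range m, a k :=
      sum_nonneg fun k hk => ha k (by simp at hk; omega)
    have ha_sum' : ∑ k ∈ range (m + 2), a k ≤ 1 :=
      (sum_le_sum_of_subset_of_nonneg (range_subset_range.2 (by omega))
        fun k hk _ => ha k (mem_range.1 hk)).trans ha_sum
    have := ha m (by omega)
    have := ha (m + 1) (by omega)
    have := hab (m + 1) (by omega)
    have := hb (m + 1) (by omega)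
    have := hle m (by omega)
    simp only [sum_range_succ] at *
    -- `a` is nonnegative with total at most one, so at most one of `a 0, …, a (m + 1)` is nonzero
    omega

namespace Fin

variable {M : Type*} [AddCommMonoid M] {n : ℕ}

theorem sum_Iic_val (f : ℕ → M) (a : Fin n) : ∑ x ∈ Iic a, f x = ∑ k ∈ range (a + 1), f k := by
  rw [← Nat.Iio_eq_range, Finset.Iio_add_one_eq_Iic, ← map_valEmbedding_Iic, sum_map]
  rfl

theorem sum_Ici_val (f : ℕ → M) (a : Fin n) : ∑ x ∈ Ici a, f x = ∑ k ∈ Ico (a : ℕ) n, f k := by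
  rw [← map_valEmbedding_Ici, sum_map]
  rfl

end Fin

namespace Magog

variable {α : Type*} {n : ℕ}

def entry [Zero α] (M : Fin n → Fin n → α) (i j : ℕ) : α :=
  if h : i < n ∧ j < n then M ⟨i, h.1⟩ ⟨j, h.2⟩ else 0

def rowSum [AddCommMonoid α] (M : Fin n → Fin n → α) (i m : ℕ) : α :=
  ∑ k ∈ range m, entry M i k

def colSum [AddCommMonoid α] (M : Fin n → Fin n → α) (m j : ℕ) : α :=
  ∑ k ∈ range m, entry M k j

def hook [AddCommMonoid α] (M : Fin n → Fin n → α) (i m : ℕ) : α :=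
  rowSum M i m + colSum M (i + 1) m

section Bridge

variable [AddCommMonoid α] (M : Fin n → Fin n → α)

@[simp]
theorem entry_val (a b : Fin n) : entry M a b = M a b := by
  simp [entry]

theorem sum_Iic_row (a b : Fin n) : ∑ j ∈ Iic b, M a j = rowSum M a (b + 1) := by
  simp only [rowSum, ← Fin.sum_Iic_val, entry_val]

theorem sum_Iic_col (a b : Fin n) : ∑ i ∈ Iic a, M i b = colSum M (a + 1) b := by
  simp only [colSum, ← Fin.sum_Iic_val, entry_val]

theorem sum_Ici_row (a b : Fin n) : ∑ j ∈ Ici b, M a j = ∑ k ∈ Ico (b : ℕ) n, entry M a k := by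
  simp only [← Fin.sum_Ici_val, entry_val]

theorem sum_Ici_col (a b : Fin n) : ∑ i ∈ Ici a, M i b = ∑ k ∈ Ico (a : ℕ) n, entry M k b := by
  simp only [← Fin.sum_Ici_val, entry_val]

theorem sum_univ_row (a : Fin n) : ∑ j, M a j = rowSum M a n := by
  simp only [rowSum, ← Fin.sum_univ_eq_sum_range, entry_val]

theorem sum_univ_col (b : Fin n) : ∑ i, M i b = colSum M n b := by
  simp only [colSum, ← Fin.sum_univ_eq_sum_range, entry_val]

theorem hook_eq (i m : ℕ) : hook M i m = rowSum M i (m + 1) + colSum M i m := by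
  simp only [hook, rowSum, colSum, sum_range_succ]
  abel

end Bridge

end Magog

open Magog

namespace IsSquareSign

variable {n : ℕ} {M : Fin n → Fin n → ℤ} (hM : IsSquareSign n M) {i j m : ℕ}
include hM

theorem colSum_nonneg (hm : m ≤ n) (hj : j < n) : 0 ≤ colSum M m j := by
  cases m with
  | zero => simp [colSum]
  | succ k => simpa only [sum_Iic_col] using (hM.2.2.2.1 ⟨k, hm⟩ ⟨j, hj⟩).1

theorem colSum_le_one (hm : m ≤ n) (hj : j < n) : colSum M m j ≤ 1 := by
  cases m with
  | zero => simp [colSum]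
  | succ k => simpa only [sum_Iic_col] using (hM.2.2.2.1 ⟨k, hm⟩ ⟨j, hj⟩).2

theorem rowSum_nonneg (hi : i < n) (hm : m ≤ n) : 0 ≤ rowSum M i m := by
  cases m with
  | zero => simp [rowSum]
  | succ k => simpa only [sum_Iic_row] using hM.2.2.2.2 ⟨i, hi⟩ ⟨k, hm⟩

theorem rowSum_eq_one (hi : i < n) : rowSum M i n = 1 := by
  simpa only [sum_univ_row] using hM.2.2.1 ⟨i, hi⟩

theorem colSum_eq_one (hj : j < n) : colSum M n j = 1 := by
  simpa only [sum_univ_col] using hM.2.1 ⟨j, hj⟩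

theorem sum_colSum (hm : m ≤ n) : ∑ j ∈ range n, colSum M m j = m := by
  calc ∑ j ∈ range n, colSum M m j = ∑ i ∈ range m, rowSum M i n := sum_comm
    _ = ∑ i ∈ range m, 1 := sum_congr rfl fun i hi => hM.rowSum_eq_one (by simp at hi; omega)
    _ = m := by simp

theorem add_le_of_colSum_nonpos {k : ℕ} (hm : m ≤ n) (hk : k ≤ n)
    (h : ∀ j < k, colSum M m j ≤ 0) : m + k ≤ n := by
  have hlow : ∑ j ∈ range k, colSum M m j ≤ 0 :=
    sum_nonpos fun j hj => h j (mem_range.1 hj)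
  have hhigh : ∑ j ∈ Ico k n, colSum M m j ≤ ∑ j ∈ Ico k n, 1 :=
    sum_le_sum fun j hj => hM.colSum_le_one hm (mem_Ico.1 hj).2
  have htotal := hM.sum_colSum hm
  rw [← sum_range_add_sum_Ico _ hk] at htotal
  simp only [sum_const, Nat.card_Ico, nsmul_eq_mul, mul_one] at hhigh
  omega

end IsSquareSign

namespace IsMagog

variable {n : ℕ} {M : Fin n → Fin n → ℤ} (hM : IsMagog n M) {i j m : ℕ}
include hM

theorem special (hi : i + 2 < n) (hj : j + 2 < n) :
    colSum M (i + 1) j ≤ rowSum M (i + 1) (j + 1) + colSum M (i + 2) (j + 1) := by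
  have h := hM.2 i j hi hj
  simp only [sum_Iic_row, sum_Iic_col] at h
  linarith

theorem hook_le_two_mul_hook_succ (hi : i + 2 < n) (hm : m + 2 < n) :
    hook M (i + 1) m ≤ 2 * hook M (i + 1) (m + 1) := by
  have hspecial := hM.special hi hm
  have hcol := hM.1.colSum_nonneg (m := i + 2) (j := m + 1) (by omega) (by omega)
  rw [hook_eq, hook]
  linarith

theorem colSum_nonpos_of_hook_nonpos (hi : i + 2 < n) (hm : m + 1 < n)
    (h : hook M (i + 1) m ≤ 0) {l : ℕ} (hl : l ≤ m) : colSum M (i + 2) l ≤ 0 := by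
  have hhook : hook M (i + 1) l ≤ 0 := by
    induction hl using Nat.decreasingInduction with
    | self => exact h
    | of_succ l hl ih => linarith [hM.hook_le_two_mul_hook_succ hi (m := l) (by omega)]
  rw [hook] at hhook
  linarith [hM.1.rowSum_nonneg (i := i + 1) (m := l) (by omega) (by omega)]

theorem one_le_hook (hi : i + 2 < n) (hj : j + 2 < n) (hij : n ≤ i + j + 3) :
    1 ≤ hook M (i + 1) (j + 1) := by
  by_contra! h
  have := hM.1.add_le_of_colSum_nonpos (m := i + 2) (k := j + 2) (by omega) (by omega)
    fun l hl => hM.colSum_nonpos_of_hook_nonpos hi (m := j + 1) (by omega) (by omega) (by omega)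
  omega

theorem one_le_rowSum_add_sum_Ico (hj : j + 2 < n) :
    1 ≤ rowSum M 1 (j + 2) + ∑ k ∈ Ico (j + 1) n, entry M 0 k := by
  have hle : rowSum M 0 (j + 1) ≤ rowSum M 1 (j + 2) := by
    refine sum_range_le_sum_range_succ_of_le_add_sum (b := fun k => entry M 1 k) (N := n)
      (fun k hk => ?_) (hM.1.rowSum_eq_one (by omega)).le (fun k hk => ?_)
      (fun k hk => hM.1.rowSum_nonneg (by omega) hk) (fun k hk => ?_) (j + 1) (by omega)
    · simpa [colSum] using hM.1.colSum_nonneg (m := 1) (by omega) hk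
    · simpa [colSum, sum_range_succ] using hM.1.colSum_nonneg (m := 2) (by omega) hk
    · have := hM.special (i := 0) (by omega) hk
      simp only [rowSum, colSum, sum_range_succ, sum_range_zero, zero_add] at this ⊢
      linarith
  have htotal := hM.1.rowSum_eq_one (i := 0) (by omega)
  simp only [rowSum] at hle htotal ⊢
  rw [← sum_range_add_sum_Ico _ (by omega : j + 1 ≤ n)] at htotal
  linarith

theorem one_le_colSum_add_sum_Ico (hi : i + 2 < n) :
    1 ≤ colSum M (i + 2) 1 + ∑ k ∈ Ico (i + 1) n, entry M k 0 := by
  have hle : colSum M (i + 1) 0 ≤ colSum M (i + 2) 1 := by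
    refine sum_range_le_sum_range_succ_of_le_add_sum (b := fun k => entry M k 1) (N := n)
      (fun k hk => ?_) (hM.1.colSum_eq_one (by omega)).le (fun k hk => ?_)
      (fun k hk => hM.1.colSum_nonneg hk (by omega)) (fun k hk => ?_) (i + 1) (by omega)
    · simpa [rowSum] using hM.1.rowSum_nonneg (m := 1) hk (by omega)
    · simpa [rowSum, sum_range_succ] using hM.1.rowSum_nonneg (m := 2) hk (by omega)
    · have := hM.special (j := 0) hk (by omega)
      have := hM.1.colSum_nonneg (m := k) (j := 0) (by omega) (by omega)
      simp only [rowSum, colSum, sum_range_succ, sum_range_zero, zero_add] at *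
      linarith
  have htotal := hM.1.colSum_eq_one (j := 0) (by omega)
  simp only [colSum] at hle htotal ⊢
  rw [← sum_range_add_sum_Ico _ (by omega : i + 1 ≤ n)] at htotal
  linarith

end IsMagog

/-- Indices are 0-based: `i, j` here are the paper's `i + 1, j + 1`. -/
theorem tsscppPolytope_inequalities (n : ℕ) :
    ∀ A ∈ convexHull ℝ (magogReal n),
      (∀ (i j : ℕ) (hi : i + 2 < n) (hj : j + 2 < n), n ≤ i + j + 3 →
        1 ≤ (∑ j' ∈ Finset.Iic (⟨j, by omega⟩ : Fin n), A ⟨i + 1, by omega⟩ j')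
          + (∑ i' ∈ Finset.Iic (⟨i + 1, by omega⟩ : Fin n), A i' ⟨j + 1, by omega⟩)) ∧
      (∀ (j : ℕ) (hj : j + 3 < n),
        1 ≤ (∑ j' ∈ Finset.Iic (⟨j + 1, by omega⟩ : Fin n), A ⟨1, by omega⟩ j')
          + (∑ j' ∈ Finset.Ici (⟨j + 1, by omega⟩ : Fin n), A ⟨0, by omega⟩ j')) ∧
      (∀ (i : ℕ) (hi : i + 3 < n),
        1 ≤ (∑ i' ∈ Finset.Iic (⟨i + 1, by omega⟩ : Fin n), A i' ⟨1, by omega⟩)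
          + (∑ i' ∈ Finset.Ici (⟨i + 1, by omega⟩ : Fin n), A i' ⟨0, by omega⟩)) := by
  intro A hA
  refine ⟨fun i j hi hj hij => ?_, fun j hj => ?_, fun i hi => ?_⟩ <;>
    refine le_of_mem_convexHull (isLinearMap_sum_apply_add_sum_apply ..) ?_ hA <;>
    rintro _ ⟨M, hM, rfl⟩ <;>
    beta_reduce <;>
    norm_cast
  · rw [sum_Iic_row, sum_Iic_col]
    exact hM.one_le_hook hi hj hij
  · rw [sum_Iic_row, sum_Ici_row]
    exact hM.one_le_rowSum_add_sum_Ico (by omega)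
  · rw [sum_Iic_col, sum_Ici_col]
    exact hM.one_le_colSum_add_sum_Ico (by omega)
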